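/- If Λ ⊆ (0,∞)ⁿ is a nonempty convex cone (closed under multiplication by positive scalars and convex), then the function β ↦ Ω(β|Λ) = inf{(1/2) Σᵢ (βᵢ²/λᵢ + λᵢ) : λ ∈ Λ} is a norm on ℝⁿ: it is nonnegative, vanishes only at 0, is absolutely homogeneous, and satisfies the triangle inequality. -/

import Mathlib

noncomputable def Omega {n : ℕ} (Λ : Set (Fin n → ℝ)) (β : Fin n → ℝ) : ℝ :=
  sInf {t : ℝ | ∃ l ∈ Λ, t = (1/2) * ∑ i, (β i ^ 2 / l i + l i)}

/-!
By AM-GM, `βᵢ² / λᵢ + λᵢ ≥ 2 |βᵢ|`, so `Ω(β) ≥ ‖β‖₁`, which gives definiteness.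
Since `Γ(cβ, |c|λ) = |c| Γ(β, λ)` and `λ ↦ |c|λ` maps the cone `Λ` into itself, `Ω` is absolutely
homogeneous. A convex cone is closed under addition, and `(a + b)² / (x + y) ≤ a² / x + b² / y`
gives `Γ(β + γ, λ + μ) ≤ Γ(β, λ) + Γ(γ, μ)`; taking infima yields the triangle inequality.
-/

open Finset

noncomputable def Gamma {n : ℕ} (β l : Fin n → ℝ) : ℝ :=
  (1/2) * ∑ i, (β i ^ 2 / l i + l i)

lemma two_mul_abs_le_sq_div_add {b x : ℝ} (hx : 0 < x) : 2 * |b| ≤ b ^ 2 / x + x := by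
  rw [div_add' _ _ _ hx.ne', le_div_iff₀ hx]
  nlinarith [sq_nonneg (|b| - x), sq_abs b]

lemma add_sq_div_add_le {a b x y : ℝ} (hx : 0 < x) (hy : 0 < y) :
    (a + b) ^ 2 / (x + y) ≤ a ^ 2 / x + b ^ 2 / y := by
  simpa [Fin.sum_univ_two] using
    sq_sum_div_le_sum_sq_div univ ![a, b] (g := ![x, y]) (by simp [Fin.forall_fin_two, hx, hy])

lemma mul_sq_div_mul_add_mul (c b x : ℝ) :
    (c * b) ^ 2 / (|c| * x) + |c| * x = |c| * (b ^ 2 / x + x) := by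
  rcases eq_or_ne c 0 with rfl | hc
  · simp
  rw [mul_pow, ← sq_abs c, sq, mul_assoc, mul_div_mul_left _ _ (abs_ne_zero.mpr hc), mul_div_assoc,
    mul_add]

lemma Convex.add_mem_of_smul_mem {E : Type*} [AddCommGroup E] [Module ℝ E] {s : Set E}
    (hs : Convex ℝ s) (hsmul : ∀ x ∈ s, ∀ t : ℝ, 0 < t → t • x ∈ s) {x y : E}
    (hx : x ∈ s) (hy : y ∈ s) : x + y ∈ s := by
  have hmid : (1/2 : ℝ) • x + (1/2 : ℝ) • y ∈ s := hs hx hy (by norm_num) (by norm_num) (by norm_num)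
  convert hsmul _ hmid 2 two_pos using 1
  rw [smul_add, smul_smul, smul_smul]
  norm_num

section Gamma

variable {n : ℕ}

lemma sum_abs_le_Gamma (β : Fin n → ℝ) {l : Fin n → ℝ} (hl : ∀ i, 0 < l i) :
    ∑ i, |β i| ≤ Gamma β l := by
  rw [Gamma, mul_sum]
  gcongr with i
  linarith [two_mul_abs_le_sq_div_add (b := β i) (hl i)]

lemma Gamma_smul (c : ℝ) (β l : Fin n → ℝ) : Gamma (c • β) (|c| • l) = |c| * Gamma β l := by
  simp only [Gamma, Pi.smul_apply, smul_eq_mul, mul_sq_div_mul_add_mul, ← mul_sum]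
  ring

lemma Gamma_add_le (β γ : Fin n → ℝ) {l m : Fin n → ℝ} (hl : ∀ i, 0 < l i) (hm : ∀ i, 0 < m i) :
    Gamma (β + γ) (l + m) ≤ Gamma β l + Gamma γ m := by
  rw [Gamma, Gamma, Gamma, ← mul_add, ← sum_add_distrib]
  refine mul_le_mul_of_nonneg_left (sum_le_sum fun i _ => ?_) (by norm_num)
  simp only [Pi.add_apply]
  linarith [add_sq_div_add_le (a := β i) (b := γ i) (hl i) (hm i)]

end Gamma

section Omega

variable {n : ℕ} {Λ : Set (Fin n → ℝ)}

lemma Omega_le_Gamma (hpos : ∀ l ∈ Λ, ∀ i, 0 < l i) (β : Fin n → ℝ) {l : Fin n → ℝ}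
    (hl : l ∈ Λ) : Omega Λ β ≤ Gamma β l := by
  refine csInf_le ⟨0, ?_⟩ ⟨l, hl, rfl⟩
  rintro _ ⟨m, hm, rfl⟩
  exact (sum_nonneg fun i _ => abs_nonneg (β i)).trans (sum_abs_le_Gamma β (hpos m hm))

lemma le_Omega (hne : Λ.Nonempty) {β : Fin n → ℝ} {a : ℝ} (h : ∀ l ∈ Λ, a ≤ Gamma β l) :
    a ≤ Omega Λ β := by
  obtain ⟨l, hl⟩ := hne
  refine le_csInf ⟨_, l, hl, rfl⟩ ?_
  rintro _ ⟨m, hm, rfl⟩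
  exact h m hm

variable (hne : Λ.Nonempty) (hpos : ∀ l ∈ Λ, ∀ i, 0 < l i)
include hne hpos

lemma sum_abs_le_Omega (β : Fin n → ℝ) : ∑ i, |β i| ≤ Omega Λ β :=
  le_Omega hne fun l hl => sum_abs_le_Gamma β (hpos l hl)

lemma Omega_nonneg (β : Fin n → ℝ) : 0 ≤ Omega Λ β :=
  (sum_nonneg fun i _ => abs_nonneg (β i)).trans (sum_abs_le_Omega hne hpos β)

variable (hcone : ∀ l ∈ Λ, ∀ t : ℝ, 0 < t → t • l ∈ Λ)
include hcone

lemma Omega_smul_le {c : ℝ} (hc : c ≠ 0) (β : Fin n → ℝ) :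
    Omega Λ (c • β) ≤ |c| * Omega Λ β := by
  have hc' : 0 < |c| := abs_pos.mpr hc
  rw [← div_le_iff₀' hc']
  refine le_Omega hne fun l hl => ?_
  rw [div_le_iff₀' hc', ← Gamma_smul]
  exact Omega_le_Gamma hpos _ (hcone l hl _ hc')

lemma Omega_smul_of_ne_zero {c : ℝ} (hc : c ≠ 0) (β : Fin n → ℝ) :
    Omega Λ (c • β) = |c| * Omega Λ β := by
  refine le_antisymm (Omega_smul_le hne hpos hcone hc β) ?_
  have h := Omega_smul_le hne hpos hcone (inv_ne_zero hc) (c • β)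
  rw [inv_smul_smul₀ hc, abs_inv, le_inv_mul_iff₀ (abs_pos.mpr hc)] at h
  exact h

lemma Omega_zero : Omega Λ 0 = 0 := by
  have h := Omega_smul_of_ne_zero hne hpos hcone two_ne_zero (0 : Fin n → ℝ)
  rw [smul_zero, abs_two] at h
  linarith

lemma Omega_smul (c : ℝ) (β : Fin n → ℝ) : Omega Λ (c • β) = |c| * Omega Λ β := by
  rcases eq_or_ne c 0 with rfl | hc
  · rw [zero_smul, abs_zero, zero_mul, Omega_zero hne hpos hcone]
  · exact Omega_smul_of_ne_zero hne hpos hcone hc β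

lemma Omega_eq_zero_iff {β : Fin n → ℝ} : Omega Λ β = 0 ↔ β = 0 := by
  refine ⟨fun h => ?_, fun h => h ▸ Omega_zero hne hpos hcone⟩
  have hsum : ∑ i, |β i| ≤ 0 := h ▸ sum_abs_le_Omega hne hpos β
  funext i
  exact abs_eq_zero.mp (le_antisymm
    ((single_le_sum (fun j _ => abs_nonneg (β j)) (mem_univ i)).trans hsum) (abs_nonneg _))

lemma Omega_add_le (hconv : Convex ℝ Λ) (β γ : Fin n → ℝ) :
    Omega Λ (β + γ) ≤ Omega Λ β + Omega Λ γ := by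
  rw [← sub_le_iff_le_add]
  refine le_Omega hne fun l hl => ?_
  rw [sub_le_comm]
  refine le_Omega hne fun m hm => ?_
  rw [sub_le_iff_le_add']
  calc Omega Λ (β + γ) ≤ Gamma (β + γ) (l + m) :=
        Omega_le_Gamma hpos _ (hconv.add_mem_of_smul_mem hcone hl hm)
    _ ≤ Gamma β l + Gamma γ m := Gamma_add_le β γ (hpos l hl) (hpos m hm)

end Omega

theorem stmt_4 (n : ℕ) (Λ : Set (Fin n → ℝ)) (hne : Λ.Nonempty)
    (hpos : ∀ l ∈ Λ, ∀ i, 0 < l i) (hconv : Convex ℝ Λ)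
    (hcone : ∀ l ∈ Λ, ∀ t : ℝ, 0 < t → t • l ∈ Λ) :
    (∀ β, 0 ≤ Omega Λ β) ∧
    (∀ β, Omega Λ β = 0 ↔ β = 0) ∧
    (∀ (c : ℝ) (β : Fin n → ℝ), Omega Λ (c • β) = |c| * Omega Λ β) ∧
    (∀ β γ : Fin n → ℝ, Omega Λ (β + γ) ≤ Omega Λ β + Omega Λ γ) :=
  ⟨Omega_nonneg hne hpos, fun _ => Omega_eq_zero_iff hne hpos hcone,
    Omega_smul hne hpos hcone, Omega_add_le hne hpos hcone hconv⟩
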